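/- arXiv:1710.01130 — 6 statements merged into one kernel-verified Lean document; each statement's English description precedes it below -/
import Mathlib

section
/- Integers x and y with x ≠ 0 and y ≠ 0 satisfy x³ + y³ + x² + y² + 1 = xyz for some integer z if and only if x divides y³ + y² + 1 and y divides x³ + x² + 1. -/
/-! Writing `S = x³ + y³ + x² + y² + 1 = x(x² + x) + (y³ + y² + 1)`, the divisibility `x ∣ S`
is equivalent to `x ∣ y³ + y² + 1`, and symmetrically `y ∣ S ↔ y ∣ x³ + x² + 1`. Moreover
`y³ + y² + 1 = y(y² + y) + 1`, so `x ∣ y³ + y² + 1` makes `x` and `y` coprime, whence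
`x ∣ S` and `y ∣ S` together give `xy ∣ S`. -/

section CommRing

variable {R : Type*} [CommRing R]

theorem isCoprime_of_dvd_mul_add_one {x y k : R} (h : x ∣ y * k + 1) : IsCoprime x y := by
  obtain ⟨a, ha⟩ := h
  exact ⟨a, -k, by linear_combination (-1 : R) * ha⟩

theorem dvd_cubic_sum_iff_left (x y : R) :
    x ∣ x ^ 3 + y ^ 3 + x ^ 2 + y ^ 2 + 1 ↔ x ∣ y ^ 3 + y ^ 2 + 1 := by
  have hsplit : x ^ 3 + y ^ 3 + x ^ 2 + y ^ 2 + 1 = x * (x ^ 2 + x) + (y ^ 3 + y ^ 2 + 1) := by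
    ring
  rw [hsplit]
  exact dvd_add_right (dvd_mul_right x _)

theorem dvd_cubic_sum_iff_right (x y : R) :
    y ∣ x ^ 3 + y ^ 3 + x ^ 2 + y ^ 2 + 1 ↔ y ∣ x ^ 3 + x ^ 2 + 1 := by
  rw [show x ^ 3 + y ^ 3 + x ^ 2 + y ^ 2 + 1 = y ^ 3 + x ^ 3 + y ^ 2 + x ^ 2 + 1 by ring]
  exact dvd_cubic_sum_iff_left y x

theorem mul_dvd_cubic_sum_iff (x y : R) :
    x * y ∣ x ^ 3 + y ^ 3 + x ^ 2 + y ^ 2 + 1 ↔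
      x ∣ y ^ 3 + y ^ 2 + 1 ∧ y ∣ x ^ 3 + x ^ 2 + 1 := by
  constructor
  · intro h
    exact ⟨(dvd_cubic_sum_iff_left x y).mp (dvd_of_mul_right_dvd h),
      (dvd_cubic_sum_iff_right x y).mp (dvd_of_mul_left_dvd h)⟩
  · rintro ⟨hx, hy⟩
    have hcop : IsCoprime x y :=
      isCoprime_of_dvd_mul_add_one (k := y ^ 2 + y) <| by
        rwa [show y * (y ^ 2 + y) + 1 = y ^ 3 + y ^ 2 + 1 by ring]
    exact hcop.mul_dvd ((dvd_cubic_sum_iff_left x y).mpr hx) ((dvd_cubic_sum_iff_right x y).mpr hy)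

end CommRing

theorem stmt_2_general (x y : ℤ) :
    (∃ z : ℤ, x^3 + y^3 + x^2 + y^2 + 1 = x * y * z) ↔
      (x ∣ y^3 + y^2 + 1 ∧ y ∣ x^3 + x^2 + 1) :=
  mul_dvd_cubic_sum_iff x y

theorem stmt_2 (x y : ℤ) (hx : x ≠ 0) (hy : y ≠ 0) :
    (∃ z : ℤ, x^3 + y^3 + x^2 + y^2 + 1 = x * y * z) ↔
      (x ∣ y^3 + y^2 + 1 ∧ y ∣ x^3 + x^2 + 1) :=
  stmt_2_general x y
end

section
/- Suppose integers x₀, y₀ satisfy x₀ | y₀³ + y₀ + 1 and y₀ | x₀³ + x₀ + 1, and let y₋₁ be the integer with y₋₁·y₀ = x₀³ + x₀ + 1. Then x₀ | y₋₁³ + y₋₁² + 1 and y₋₁ | x₀³ + x₀ + 1; that is, (y₋₁, x₀) is a solution to the system S_{1,2}. -/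
/-! Modulo x₀ we have ym·y₀ ≡ 1, so ym is the inverse of y₀; multiplying y₀³ + y₀ + 1 ≡ 0 by ym³
turns it into the reversed polynomial ym³ + ym² + 1 ≡ 0. -/

theorem dvd_reverse_cubic_of_dvd_mul_sub_one {R : Type*} [CommRing R] {a u v : R} (b c d : R)
    (hinv : a ∣ u * v - 1) (hroot : a ∣ v ^ 3 + b * v ^ 2 + c * v + d) :
    a ∣ d * u ^ 3 + c * u ^ 2 + b * u + 1 := by
  have key : d * u ^ 3 + c * u ^ 2 + b * u + 1 =
      u ^ 3 * (v ^ 3 + b * v ^ 2 + c * v + d) -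
        (u * v - 1) * ((u * v) ^ 2 + u * v + 1 + b * u * (u * v + 1) + c * u ^ 2) := by
    ring
  rw [key]
  exact dvd_sub (dvd_mul_of_dvd_right hroot _) (dvd_mul_of_dvd_left hinv _)

theorem stmt_5_general (x₀ y₀ ym : ℤ)
    (h1 : x₀ ∣ y₀^3 + y₀ + 1)
    (hym : ym * y₀ = x₀^3 + x₀ + 1) :
    x₀ ∣ ym^3 + ym^2 + 1 ∧ ym ∣ x₀^3 + x₀ + 1 := by
  have hinv : x₀ ∣ ym * y₀ - 1 := ⟨x₀ ^ 2 + 1, by rw [hym]; ring⟩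
  have hroot : x₀ ∣ y₀ ^ 3 + 0 * y₀ ^ 2 + 1 * y₀ + 1 := by simpa using h1
  refine ⟨?_, Dvd.intro y₀ hym⟩
  simpa using dvd_reverse_cubic_of_dvd_mul_sub_one 0 1 1 hinv hroot

theorem stmt_5 (x₀ y₀ ym : ℤ) (hx : x₀ ≠ 0) (hy : y₀ ≠ 0)
    (h1 : x₀ ∣ y₀^3 + y₀ + 1) (h2 : y₀ ∣ x₀^3 + x₀ + 1)
    (hym : ym * y₀ = x₀^3 + x₀ + 1) :
    x₀ ∣ ym^3 + ym^2 + 1 ∧ ym ∣ x₀^3 + x₀ + 1 :=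
  stmt_5_general x₀ y₀ ym h1 hym
end

section
/- Suppose integers x₀, y₀ satisfy x₀ | y₀³ + y₀² + 1 and y₀ | x₀³ + x₀ + 1, and let x₁ be the integer with x₀·x₁ = y₀³ + y₀² + 1. Then x₁ | y₀³ + y₀² + 1 and y₀ | x₁³ + x₁² + 1; that is, (y₀, x₁) is a solution to S_{2,2}. -/
/-!
Modulo `y₀` we have `x₀ x₁ ≡ 1`, and `X³ + X² + 1` is the reciprocal polynomial of `X³ + X + 1`,
so `x₁³ + x₁² + 1 ≡ x₁³ (x₀³ + x₀ + 1) ≡ 0`.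
-/

theorem dvd_cube_add_sq_add_one_of_dvd_mul_sub_one {R : Type*} [CommRing R] {d a b : R}
    (hab : d ∣ a * b - 1) (ha : d ∣ a ^ 3 + a + 1) : d ∣ b ^ 3 + b ^ 2 + 1 := by
  have reciprocal : b ^ 3 + b ^ 2 + 1 =
      b ^ 3 * (a ^ 3 + a + 1) - (a * b - 1) * (b ^ 2 + 1 + a * b + (a * b) ^ 2) := by
    ring
  rw [reciprocal]
  exact dvd_sub (dvd_mul_of_dvd_right ha _) (dvd_mul_of_dvd_left hab _)

theorem stmt_6_general (x₀ y₀ x₁ : ℤ) (h2 : y₀ ∣ x₀^3 + x₀ + 1)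
    (hx1 : x₀ * x₁ = y₀^3 + y₀^2 + 1) :
    x₁ ∣ y₀^3 + y₀^2 + 1 ∧ y₀ ∣ x₁^3 + x₁^2 + 1 := by
  have hmul : y₀ ∣ x₀ * x₁ - 1 := ⟨y₀ ^ 2 + y₀, by rw [hx1]; ring⟩
  exact ⟨Dvd.intro_left x₀ hx1, dvd_cube_add_sq_add_one_of_dvd_mul_sub_one hmul h2⟩

theorem stmt_6 (x₀ y₀ x₁ : ℤ) (hx : x₀ ≠ 0) (hy : y₀ ≠ 0)
    (h1 : x₀ ∣ y₀^3 + y₀^2 + 1) (h2 : y₀ ∣ x₀^3 + x₀ + 1)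
    (hx1 : x₀ * x₁ = y₀^3 + y₀^2 + 1) :
    x₁ ∣ y₀^3 + y₀^2 + 1 ∧ y₀ ∣ x₁^3 + x₁^2 + 1 :=
  stmt_6_general x₀ y₀ x₁ h2 hx1
end

section
/- Suppose integers x₀, y₀ satisfy x₀ | y₀³ + y₀² + 1 and y₀ | x₀³ + x₀² + 1, and let x₁ be the integer with x₀·x₁ = y₀³ + y₀² + 1. Then x₁ | y₀³ + y₀² + 1 and y₀ | x₁³ + x₁ + 1; that is, (y₀, x₁) is a solution to S_{1,2}. -/
/-!
Modulo `y₀` we have `x₀ x₁ = y₀³ + y₀² + 1 ≡ 1`, so `x₁` inverts `x₀`. Multiplying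
`x₀³ + x₀² + 1 ≡ 0` by `x₁³` turns it into the reversed polynomial `1 + x₁ + x₁³ ≡ 0`.
-/

theorem dvd_reversed_of_dvd_of_dvd_mul_sub_one {R : Type*} [CommRing R] {x x' y : R}
    (h : y ∣ x ^ 3 + x ^ 2 + 1) (hinv : y ∣ x * x' - 1) : y ∣ x' ^ 3 + x' + 1 := by
  have key : x' ^ 3 + x' + 1 = x' ^ 3 * (x ^ 3 + x ^ 2 + 1) -
      (x * x' - 1) * ((x * x') ^ 2 + x * x' + 1 + x' * (x * x' + 1)) := by ring
  rw [key]
  exact dvd_sub (h.mul_left _) (hinv.mul_right _)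

theorem stmt_7_general (x₀ y₀ x₁ : ℤ) (h2 : y₀ ∣ x₀^3 + x₀^2 + 1)
    (hx1 : x₀ * x₁ = y₀^3 + y₀^2 + 1) :
    x₁ ∣ y₀^3 + y₀^2 + 1 ∧ y₀ ∣ x₁^3 + x₁ + 1 := by
  refine ⟨⟨x₀, by rw [← hx1, mul_comm]⟩, dvd_reversed_of_dvd_of_dvd_mul_sub_one h2 ?_⟩
  exact ⟨y₀ ^ 2 + y₀, by linear_combination hx1⟩

theorem stmt_7 (x₀ y₀ x₁ : ℤ) (hx : x₀ ≠ 0) (hy : y₀ ≠ 0)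
    (h1 : x₀ ∣ y₀^3 + y₀^2 + 1) (h2 : y₀ ∣ x₀^3 + x₀^2 + 1)
    (hx1 : x₀ * x₁ = y₀^3 + y₀^2 + 1) :
    x₁ ∣ y₀^3 + y₀^2 + 1 ∧ y₀ ∣ x₁^3 + x₁ + 1 :=
  stmt_7_general x₀ y₀ x₁ h2 hx1
end

section
/- If a sequence of integers u : ℤ → ℤ satisfies u(n-1)·u(n+1) = u(n)³ + u(n)^{f(n)} + 1 for all n, where f(n) = 1 if n ≡ 0 or 3 (mod 4) and f(n) = 2 if n ≡ 1 or 2 (mod 4), then no term u(n) is divisible by 2, 5, or 7. -/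
/-- The recurrence at `n + 1` exhibits `u n` as a divisor of `u (n+1) ^ 3 + u (n+1) ^ f (n+1) + 1`,
so a modulus dividing `u n` yields a root of that polynomial. -/
theorem not_dvd_of_forall_ne_zero {u : ℤ → ℤ} {f : ℤ → ℕ}
    (h : ∀ n, u (n - 1) * u (n + 1) = u n ^ 3 + u n ^ f n + 1) {m : ℕ}
    (hm : ∀ n (t : ZMod m), t ^ 3 + t ^ f n + 1 ≠ 0) (n : ℤ) : ¬ (m : ℤ) ∣ u n := by
  intro hd
  have hrec := h (n + 1)
  rw [add_sub_cancel_right] at hrec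
  have hdvd : (m : ℤ) ∣ u (n + 1) ^ 3 + u (n + 1) ^ f (n + 1) + 1 := hrec ▸ hd.mul_right _
  apply hm (n + 1) (u (n + 1))
  exact_mod_cast (ZMod.intCast_zmod_eq_zero_iff_dvd _ m).mpr hdvd

theorem ite_one_two_eq_one_or_eq_two (P : Prop) [Decidable P] :
    (if P then 1 else 2) = 1 ∨ (if P then 1 else 2) = 2 := by
  split_ifs <;> simp

theorem stmt_13 (u : ℤ → ℤ)
    (h : ∀ n : ℤ, u (n-1) * u (n+1)
        = u n ^ 3 + u n ^ (if n % 4 = 0 ∨ n % 4 = 3 then 1 else 2) + 1) :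
    ∀ n : ℤ, ¬ (2 ∣ u n) ∧ ¬ (5 ∣ u n) ∧ ¬ (7 ∣ u n) := by
  intro n
  have key (m : ℕ) (hm : ∀ t : ZMod m, t ^ 3 + t + 1 ≠ 0 ∧ t ^ 3 + t ^ 2 + 1 ≠ 0) :
      ¬ (m : ℤ) ∣ u n := by
    refine not_dvd_of_forall_ne_zero h (fun k t => ?_) n
    rcases ite_one_two_eq_one_or_eq_two (k % 4 = 0 ∨ k % 4 = 3) with hk | hk <;> rw [hk]
    · simpa using (hm t).1
    · exact (hm t).2
  exact ⟨key 2 (by decide), key 5 (by decide), key 7 (by decide)⟩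
end

section
/- Let p be a prime and u, v, w integers with p not dividing u - v, p not dividing w. Suppose: u³ + u + 1 ≡ 0 (mod p), v³ + v + 1 ≡ 0 (mod p), (vw)³ + (vw)² + 1 ≡ 0 (mod p), and (uw)³ + (uw)² + 1 ≡ 0 (mod p). Then (-w)³ + (-w) + 1 ≡ 0 (mod p), i.e. p divides w³ + w - 1. -/
/-!
Work in `ZMod p`. Subtracting the two cubic relations for `u` and `v` and cancelling `u - v`
gives `u² + uv + v² + 1 = 0`. Subtracting the two relations for `uw` and `vw` and using this
then factors as `(u - v) w² (u + v - w) = 0`, so `w = u + v`. Finally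
`w³ + w - 1 = (2u + v)(u² + uv + v² + 1) - (u³ + u + 1)` once `w = u + v`.
-/

section CubicRoots

variable {R : Type*} [CommRing R] {a b c : R}

theorem sq_add_mul_add_sq_add_one_eq_zero [NoZeroDivisors R] (hab : a ≠ b)
    (ha : a ^ 3 + a + 1 = 0) (hb : b ^ 3 + b + 1 = 0) : a ^ 2 + a * b + b ^ 2 + 1 = 0 := by
  have h : (a - b) * (a ^ 2 + a * b + b ^ 2 + 1) = 0 := by linear_combination ha - hb
  exact (mul_eq_zero.mp h).resolve_left (sub_ne_zero.mpr hab)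

theorem add_eq_of_mul_roots [NoZeroDivisors R] (hab : a ≠ b) (hc : c ≠ 0)
    (hsq : a ^ 2 + a * b + b ^ 2 + 1 = 0)
    (hac : (a * c) ^ 3 + (a * c) ^ 2 + 1 = 0) (hbc : (b * c) ^ 3 + (b * c) ^ 2 + 1 = 0) :
    a + b = c := by
  have h : (a - b) * c ^ 2 * (a + b - c) = 0 := by
    linear_combination hac - hbc - (a - b) * c ^ 3 * hsq
  rcases mul_eq_zero.mp h with h | h
  · exact absurd h (mul_ne_zero (sub_ne_zero.mpr hab) (pow_ne_zero 2 hc))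
  · exact sub_eq_zero.mp h

theorem cube_add_sub_one_eq_zero_of_add_eq (ha : a ^ 3 + a + 1 = 0)
    (hsq : a ^ 2 + a * b + b ^ 2 + 1 = 0) (hsum : a + b = c) : c ^ 3 + c - 1 = 0 := by
  subst hsum
  linear_combination (2 * a + b) * hsq - ha

end CubicRoots

theorem stmt_19 (p : ℕ) (hp : p.Prime) (u v w : ℤ)
    (h1 : ¬ ((p : ℤ) ∣ u - v)) (h2 : ¬ ((p : ℤ) ∣ w))
    (hu : (p : ℤ) ∣ u^3 + u + 1) (hv : (p : ℤ) ∣ v^3 + v + 1)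
    (hvw : (p : ℤ) ∣ (v*w)^3 + (v*w)^2 + 1)
    (huw : (p : ℤ) ∣ (u*w)^3 + (u*w)^2 + 1) :
    (p : ℤ) ∣ (-w)^3 + (-w) + 1 := by
  have := Fact.mk hp
  simp only [← ZMod.intCast_zmod_eq_zero_iff_dvd] at h1 h2 hu hv hvw huw ⊢
  push_cast at h1 h2 hu hv hvw huw ⊢
  have huv : (u : ZMod p) ≠ v := fun h => h1 (sub_eq_zero.mpr h)
  have hsq := sq_add_mul_add_sq_add_one_eq_zero huv hu hv
  have hsum := add_eq_of_mul_roots huv h2 hsq huw hvw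
  linear_combination -cube_add_sub_one_eq_zero_of_add_eq hu hsq hsum
end
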